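/- arXiv:2012.05297 — 6 statements merged into one kernel-verified Lean document; each statement's English description precedes it below -/
import Mathlib

section
/- Let X be a compact metric space, f : X → X continuous, and 𝒢 a grid on X (a finite collection of nonempty compact sets covering X, each equal to the closure of its interior, with pairwise disjoint interiors). Then the minimal multivalued map ℱ(G) = {H ∈ 𝒢 : H ∩ f(G) ≠ ∅} is an outer approximation of f, i.e., for every G ∈ 𝒢, f(G) ⊆ interior of the union of the elements of ℱ(G). -/
/-- The minimal multivalued map associated to a continuous map `f` on a grid `𝒢`
is an outer approximation of `f`. -/
theorem stmt_0 {X : Type*} [MetricSpace X] [CompactSpace X]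
    (f : X → X) (hf : Continuous f) (𝒢 : Finset (Set X))
    (hne : ∀ G ∈ 𝒢, (G : Set X).Nonempty)
    (hcpt : ∀ G ∈ 𝒢, IsCompact G)
    (hcover : ⋃₀ (𝒢 : Set (Set X)) = Set.univ)
    (hreg : ∀ G ∈ 𝒢, G = closure (interior G))
    (hdisj : ∀ G ∈ 𝒢, ∀ H ∈ 𝒢, G ≠ H → G ∩ interior H = ∅) :
    ∀ G ∈ 𝒢, f '' G ⊆ interior (⋃₀ {H | H ∈ 𝒢 ∧ (H ∩ f '' G).Nonempty}) := by
  classical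
  intro G hG y hy
  set B : Finset (Set X) := 𝒢.filter (fun H => y ∉ H) with hB
  have hScl : IsClosed (⋃₀ (B : Set (Set X))) := by
    rw [Set.sUnion_eq_biUnion]
    apply Set.Finite.isClosed_biUnion B.finite_toSet
    intro H hH
    simp only [hB, Finset.coe_filter, Set.mem_setOf_eq] at hH
    exact (hcpt H hH.1).isClosed
  have hyS : y ∈ (⋃₀ (B : Set (Set X)))ᶜ := by
    rintro ⟨H, hH, hyH⟩
    simp only [hB, Finset.coe_filter, Set.mem_setOf_eq] at hH
    exact hH.2 hyH
  have hsub : (⋃₀ (B : Set (Set X)))ᶜ ⊆ ⋃₀ {H | H ∈ 𝒢 ∧ (H ∩ f '' G).Nonempty} := by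
    intro z hz
    have hzU : z ∈ ⋃₀ (𝒢 : Set (Set X)) := hcover ▸ Set.mem_univ z
    obtain ⟨H, hH, hzH⟩ := hzU
    by_cases hyH : y ∈ H
    · exact ⟨H, ⟨Finset.mem_coe.mp hH, ⟨y, hyH, hy⟩⟩, hzH⟩
    · exact absurd ⟨H, by simp [hB, Finset.mem_coe.mp hH, hyH], hzH⟩ hz
  exact interior_maximal hsub hScl.isOpen_compl hyS
end

section
/- Let M be a finite directed acyclic graph whose edge relation is transitive, and let v ≻ v' be vertices with no intermediate vertices (I(v,v') = {u : v ≻ u ≻ v'} = ∅) such that u ≻ u' for all u ∈ A(v') and u' ∈ B(v). Let M' be obtained from M by merging v and v' into a single vertex (identifying parallel edges that arise). Then M' has the same number of weakly connected components as M, and the cycle rank of M' equals the cycle rank of M minus (a(v) + b(v')), where a(v) = #{u : u ≻ v} and b(v') = #{u : u ≺ v'}. -/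
/-- Two vertices are joined when there is an edge between them in either direction. -/
def wrel {V : Type*} (E : Finset (V × V)) (a b : V) : Prop :=
  (a, b) ∈ E ∨ (b, a) ∈ E

/-- The setoid of weak connectivity on the vertex set `Vs`. -/
def wsetoid {V : Type*} (Vs : Finset V) (E : Finset (V × V)) :
    Setoid {x // x ∈ Vs} :=
  Relation.EqvGen.setoid (fun a b => wrel E a.1 b.1)

open scoped Classical in
/-- The number of weakly connected components of the graph with vertex set `Vs`
and edge set `E` (this is `dim H₀`). -/
noncomputable def ncomp {V : Type*} [Fintype V] (Vs : Finset V) (E : Finset (V × V)) : ℕ :=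
  Fintype.card (Quotient (wsetoid Vs E))

/-- The cycle rank `E - V + C` of the graph (this is `dim H₁` over a field). -/
noncomputable def betti1 {V : Type*} [Fintype V] (Vs : Finset V) (E : Finset (V × V)) : ℤ :=
  (E.card : ℤ) - (Vs.card : ℤ) + (ncomp Vs E : ℤ)

/-- Merging two adjacent vertices `v ≻ v'` of a Morse graph with no intermediate
vertices, such that `u ≻ u'` for all `u ∈ A(v')`, `u' ∈ B(v)`, leaves `dim H₀`
unchanged and decreases the cycle rank `dim H₁` by exactly `a(v) + b(v')`. -/
theorem stmt_9 {V : Type*} [Fintype V] [DecidableEq V]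
    (Vs : Finset V) (E : Finset (V × V))
    (hEV : ∀ p ∈ E, p.1 ∈ Vs ∧ p.2 ∈ Vs)
    (hirr : ∀ a : V, (a, a) ∉ E)
    (htrans : ∀ a b c : V, (a, b) ∈ E → (b, c) ∈ E → (a, c) ∈ E)
    (v v' : V) (hv : v ∈ Vs) (hv' : v' ∈ Vs) (hvv : v ≠ v')
    (hedge : (v, v') ∈ E)
    -- no intermediate vertices: I(v,v') = ∅
    (hinter : ∀ u : V, (v, u) ∈ E → (u, v') ∈ E → False)
    -- u ≻ u' for all u ∈ A(v') and u' ∈ B(v)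
    (hAB : ∀ u u' : V, (u, v') ∈ E → (v, u') ∈ E → (u, u') ∈ E) :
    ncomp (Vs.erase v')
        (((E.erase (v, v')).erase (v', v)).image
          (fun p => (if p.1 = v' then v else p.1, if p.2 = v' then v else p.2)))
      = ncomp Vs E ∧
    betti1 (Vs.erase v')
        (((E.erase (v, v')).erase (v', v)).image
          (fun p => (if p.1 = v' then v else p.1, if p.2 = v' then v else p.2)))
      = betti1 Vs E
        - (((Vs.filter fun u => (u, v) ∈ E).card : ℤ)
            + ((Vs.filter fun u => (v', u) ∈ E).card : ℤ)) := by
  classical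
  set f : V × V → V × V :=
    fun p => (if p.1 = v' then v else p.1, if p.2 = v' then v else p.2) with hfdef
  set T : Finset (V × V) := (E.erase (v, v')).erase (v', v) with hTdef
  set E' : Finset (V × V) := T.image f with hE'def
  have hvv'E : (v', v) ∉ E := fun h => hirr v (htrans v v' v hedge h)
  have hTmem : ∀ p : V × V, p ∈ T ↔ p ∈ E ∧ p ≠ (v, v') := by
    intro p
    simp only [hTdef, Finset.mem_erase]
    constructor
    · rintro ⟨_, h2, h3⟩; exact ⟨h3, h2⟩
    · rintro ⟨h1, h2⟩
      exact ⟨fun hp => hvv'E (hp ▸ h1), h2, h1⟩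
  -- the substitution map on vertices
  have hmemVs' : ∀ x : V, x ∈ Vs → (if x = v' then v else x) ∈ Vs.erase v' := by
    intro x hx
    split_ifs with h
    · exact Finset.mem_erase.mpr ⟨hvv, hv⟩
    · exact Finset.mem_erase.mpr ⟨h, hx⟩
  set r : {x // x ∈ Vs} → {x // x ∈ Vs} → Prop := fun a b => wrel E a.1 b.1 with hrdef
  set r' : {x // x ∈ Vs.erase v'} → {x // x ∈ Vs.erase v'} → Prop :=
    fun a b => wrel E' a.1 b.1 with hr'def
  set q : {x // x ∈ Vs} → {x // x ∈ Vs.erase v'} :=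
    fun a => ⟨if a.1 = v' then v else a.1, hmemVs' a.1 a.2⟩ with hqdef
  set ι : {x // x ∈ Vs.erase v'} → {x // x ∈ Vs} :=
    fun a => ⟨a.1, (Finset.mem_erase.mp a.2).2⟩ with hιdef
  have hcol : ∀ x y : V, (if x = v' then v else x) ≠ (if y = v' then v else y) →
      (x, y) ∈ E → ((if x = v' then v else x), (if y = v' then v else y)) ∈ E' := by
    intro x y hne hxy
    have hxyT : (x, y) ∈ T := by
      rw [hTmem]
      refine ⟨hxy, fun h => hne ?_⟩
      have h1 : x = v := congrArg Prod.fst h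
      have h2 : y = v' := congrArg Prod.snd h
      subst h1; subst h2
      simp [hvv]
    exact Finset.mem_image.mpr ⟨(x, y), hxyT, rfl⟩
  have L1 : ∀ a b : {x // x ∈ Vs}, r a b → Relation.EqvGen r' (q a) (q b) := by
    intro a b hab
    by_cases heq : (if a.1 = v' then v else a.1) = (if b.1 = v' then v else b.1)
    · have : q a = q b := Subtype.ext heq
      rw [this]; exact Relation.EqvGen.refl _
    · rcases hab with h | h
      · exact Relation.EqvGen.rel _ _ (Or.inl (hcol a.1 b.1 heq h))
      · exact Relation.EqvGen.rel _ _ (Or.inr (hcol b.1 a.1 (Ne.symm heq) h))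
  have L2 : ∀ a : {x // x ∈ Vs}, Relation.EqvGen r (ι (q a)) a := by
    intro a
    by_cases h : a.1 = v'
    · apply Relation.EqvGen.rel
      show wrel E (ι (q a)).1 a.1
      have h1 : (ι (q a)).1 = v := by simp [hqdef, hιdef, h]
      rw [h1, h]
      exact Or.inl hedge
    · have : ι (q a) = a := Subtype.ext (by simp [hqdef, hιdef, h])
      rw [this]; exact Relation.EqvGen.refl _
  have L3' : ∀ a b : {x // x ∈ Vs.erase v'}, (a.1, b.1) ∈ E' →
      Relation.EqvGen r (ι a) (ι b) := by
    intro a b h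
    obtain ⟨p, hpT, hfp⟩ := Finset.mem_image.mp h
    have hpE : p ∈ E := ((hTmem p).mp hpT).1
    have h1 : p.1 ∈ Vs := (hEV p hpE).1
    have h2 : p.2 ∈ Vs := (hEV p hpE).2
    have ea : ι a = ι (q ⟨p.1, h1⟩) := Subtype.ext (congrArg Prod.fst hfp).symm
    have eb : ι b = ι (q ⟨p.2, h2⟩) := Subtype.ext (congrArg Prod.snd hfp).symm
    rw [ea, eb]
    refine Relation.EqvGen.trans _ _ _ (L2 ⟨p.1, h1⟩) ?_
    refine Relation.EqvGen.trans _ _ _ ?_ (Relation.EqvGen.symm _ _ (L2 ⟨p.2, h2⟩))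
    exact Relation.EqvGen.rel _ _ (Or.inl hpE)
  have L3 : ∀ a b : {x // x ∈ Vs.erase v'}, r' a b → Relation.EqvGen r (ι a) (ι b) := by
    intro a b hab
    rcases hab with h | h
    · exact L3' a b h
    · exact Relation.EqvGen.symm _ _ (L3' b a h)
  have hFwd : ∀ a b : {x // x ∈ Vs}, Relation.EqvGen r a b →
      Relation.EqvGen r' (q a) (q b) := by
    intro a b h
    induction h with
    | rel a b h => exact L1 a b h
    | refl a => exact Relation.EqvGen.refl _
    | symm a b _ ih => exact Relation.EqvGen.symm _ _ ih
    | trans a b c _ _ ih1 ih2 => exact Relation.EqvGen.trans _ _ _ ih1 ih2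
  have hBwd : ∀ a b : {x // x ∈ Vs.erase v'}, Relation.EqvGen r' a b →
      Relation.EqvGen r (ι a) (ι b) := by
    intro a b h
    induction h with
    | rel a b h => exact L3 a b h
    | refl a => exact Relation.EqvGen.refl _
    | symm a b _ ih => exact Relation.EqvGen.symm _ _ ih
    | trans a b c _ _ ih1 ih2 => exact Relation.EqvGen.trans _ _ _ ih1 ih2
  have hqι : ∀ a : {x // x ∈ Vs.erase v'}, q (ι a) = a := by
    intro a
    exact Subtype.ext (by simp [hqdef, hιdef, (Finset.mem_erase.mp a.2).1])
  let e : Quotient (wsetoid Vs E) ≃ Quotient (wsetoid (Vs.erase v') E') :=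
    { toFun := Quotient.lift (fun a => Quotient.mk (wsetoid (Vs.erase v') E') (q a))
        (fun a b h => Quotient.sound (hFwd a b h))
      invFun := Quotient.lift (fun a => Quotient.mk (wsetoid Vs E) (ι a))
        (fun a b h => Quotient.sound (hBwd a b h))
      left_inv := fun x => Quotient.inductionOn x (fun a => Quotient.sound (L2 a))
      right_inv := fun x => Quotient.inductionOn x (fun a => by
        show Quotient.mk _ (q (ι a)) = Quotient.mk _ a
        rw [hqι a]) }
  have hcomp : ncomp (Vs.erase v') E' = ncomp Vs E := by
    unfold ncomp
    exact Fintype.card_congr e.symm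
  refine ⟨hcomp, ?_⟩
  -- now the edge count
  have hcardT : T.card + 1 = E.card := by
    have h1 : (v', v) ∉ E.erase (v, v') := fun h => hvv'E (Finset.mem_of_mem_erase h)
    rw [hTdef, Finset.erase_eq_of_notMem h1]
    exact Finset.card_erase_add_one hedge
  set Av : Finset (V × V) := T.filter (fun p => p.2 = v' ∧ (p.1, v) ∈ E) with hAvdef
  set Bv : Finset (V × V) := T.filter (fun p => p.1 = v') with hBvdef
  have hAv : Av = (Vs.filter fun u => (u, v) ∈ E).image (fun u => (u, v')) := by
    ext p
    simp only [hAvdef, Finset.mem_filter, Finset.mem_image, hTmem]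
    constructor
    · rintro ⟨⟨hpE, hpne⟩, h2, h3⟩
      exact ⟨p.1, ⟨(hEV p hpE).1, h3⟩, by rw [← h2]⟩
    · rintro ⟨u, ⟨huVs, huv⟩, rfl⟩
      have huv' : u ≠ v := fun h => hirr v (h ▸ huv)
      refine ⟨⟨htrans u v v' huv hedge, fun h => huv' (congrArg Prod.fst h)⟩, rfl, huv⟩
  have hBv : Bv = (Vs.filter fun u => (v', u) ∈ E).image (fun u => (v', u)) := by
    ext p
    simp only [hBvdef, Finset.mem_filter, Finset.mem_image, hTmem]
    constructor
    · rintro ⟨⟨hpE, hpne⟩, h2⟩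
      refine ⟨p.2, ⟨(hEV p hpE).2, by rw [← h2]; exact hpE⟩, by rw [← h2]⟩
    · rintro ⟨u, ⟨huVs, huv⟩, rfl⟩
      exact ⟨⟨huv, fun h => hvv (congrArg Prod.fst h).symm⟩, rfl⟩
  have hAcard : Av.card = (Vs.filter fun u => (u, v) ∈ E).card := by
    rw [hAv]
    exact Finset.card_image_of_injective _ (fun a b h => congrArg Prod.fst h)
  have hBcard : Bv.card = (Vs.filter fun u => (v', u) ∈ E).card := by
    rw [hBv]
    exact Finset.card_image_of_injective _ (fun a b h => congrArg Prod.snd h)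
  have hdisj : Disjoint Av Bv := by
    rw [Finset.disjoint_left]
    intro p hpA hpB
    rw [hAvdef, Finset.mem_filter] at hpA
    rw [hBvdef, Finset.mem_filter] at hpB
    have : (v', v') ∈ E := by
      have := ((hTmem p).mp hpA.1).1
      rwa [show p = (v', v') from Prod.ext hpB.2 hpA.2.1] at this
    exact hirr v' this
  have hsub : Av ∪ Bv ⊆ T :=
    Finset.union_subset (Finset.filter_subset _ _) (Finset.filter_subset _ _)
  have himg : E' = (T \ (Av ∪ Bv)).image f := by
    apply Finset.Subset.antisymm
    · intro x hx
      obtain ⟨p, hpT, rfl⟩ := Finset.mem_image.mp hx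
      by_cases hp : p ∈ Av ∪ Bv
      · rcases Finset.mem_union.mp hp with hpA | hpB
        · rw [hAvdef, Finset.mem_filter] at hpA
          obtain ⟨_, hp2, hp1v⟩ := hpA
          have hp1ne' : p.1 ≠ v' := fun h => hvv'E (h ▸ hp1v)
          have hq0T : (p.1, v) ∈ T := (hTmem _).mpr ⟨hp1v,
            fun h => hvv (congrArg Prod.snd h)⟩
          have hq0N : (p.1, v) ∉ Av ∪ Bv := by
            intro h
            rcases Finset.mem_union.mp h with h | h
            · exact hvv ((Finset.mem_filter.mp h).2.1)
            · exact hp1ne' ((Finset.mem_filter.mp h).2)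
          have hfpq : f p = f (p.1, v) := by
            simp [hfdef, hp2, if_neg hvv, if_neg hp1ne']
          rw [hfpq]
          exact Finset.mem_image_of_mem f (Finset.mem_sdiff.mpr ⟨hq0T, hq0N⟩)
        · rw [hBvdef, Finset.mem_filter] at hpB
          obtain ⟨_, hp1⟩ := hpB
          have hpE : p ∈ E := ((hTmem p).mp hpT).1
          have hv'p2 : (v', p.2) ∈ E := by rw [← hp1]; exact hpE
          have hp2ne' : p.2 ≠ v' := fun h => hirr v' (h ▸ hv'p2)
          have hvp2 : (v, p.2) ∈ E := htrans v v' p.2 hedge hv'p2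
          have hq0T : (v, p.2) ∈ T := (hTmem _).mpr ⟨hvp2,
            fun h => hp2ne' (congrArg Prod.snd h)⟩
          have hq0N : (v, p.2) ∉ Av ∪ Bv := by
            intro h
            rcases Finset.mem_union.mp h with h | h
            · exact hp2ne' ((Finset.mem_filter.mp h).2.1)
            · exact hvv ((Finset.mem_filter.mp h).2)
          have hfpq : f p = f (v, p.2) := by
            simp [hfdef, hp1, if_neg hvv]
          rw [hfpq]
          exact Finset.mem_image_of_mem f (Finset.mem_sdiff.mpr ⟨hq0T, hq0N⟩)
      · exact Finset.mem_image_of_mem f (Finset.mem_sdiff.mpr ⟨hpT, hp⟩)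
    · exact Finset.image_subset_image (Finset.sdiff_subset)
  have hinj : Set.InjOn f ((T \ (Av ∪ Bv)) : Finset (V × V)) := by
    intro p hp q hq hfpq
    obtain ⟨hpT, hpN⟩ := Finset.mem_sdiff.mp (Finset.mem_coe.mp hp)
    obtain ⟨hqT, hqN⟩ := Finset.mem_sdiff.mp (Finset.mem_coe.mp hq)
    have hp1 : p.1 ≠ v' := fun h =>
      hpN (Finset.mem_union_right _ (Finset.mem_filter.mpr ⟨hpT, h⟩))
    have hq1 : q.1 ≠ v' := fun h =>
      hqN (Finset.mem_union_right _ (Finset.mem_filter.mpr ⟨hqT, h⟩))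
    have hfst : p.1 = q.1 := by
      have := congrArg Prod.fst hfpq
      simpa [hfdef, if_neg hp1, if_neg hq1] using this
    have hsndeq := congrArg Prod.snd hfpq
    have hsnd : p.2 = q.2 := by
      by_cases hp2 : p.2 = v' <;> by_cases hq2 : q.2 = v'
      · rw [hp2, hq2]
      · exfalso
        have hvq : v = q.2 := by simpa [hfdef, hp2, if_neg hq2] using hsndeq
        have hq2E : (p.1, v) ∈ E := by
          have := ((hTmem q).mp hqT).1
          rw [hfst, hvq]; exact this
        exact hpN (Finset.mem_union_left _ (Finset.mem_filter.mpr ⟨hpT, hp2, hq2E⟩))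
      · exfalso
        have hvp : v = p.2 := by
          have := hsndeq.symm
          simpa [hfdef, hq2, if_neg hp2] using this
        have hp2E : (q.1, v) ∈ E := by
          have := ((hTmem p).mp hpT).1
          rw [← hfst, hvp]; exact this
        exact hqN (Finset.mem_union_left _ (Finset.mem_filter.mpr ⟨hqT, hq2, hp2E⟩))
      · simpa [hfdef, if_neg hp2, if_neg hq2] using hsndeq
    exact Prod.ext hfst hsnd
  have hcardE' : E'.card + (Av.card + Bv.card) = T.card := by
    rw [himg, Finset.card_image_of_injOn hinj, ← Finset.card_union_of_disjoint hdisj,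
      Finset.card_sdiff_of_subset hsub]
    exact Nat.sub_add_cancel (Finset.card_le_card hsub)
  have hVsc : (Vs.erase v').card + 1 = Vs.card := Finset.card_erase_add_one hv'
  unfold betti1
  rw [hcomp, ← hAcard, ← hBcard]
  omega
end

section
/- Let M be a finite directed acyclic graph with transitive edge relation, and let u, u' be incomparable vertices. Set v to be a maximal element of ({u} ∪ A(u)) ∩ N(u') and v' a minimal element of ({u'} ∪ B(u')) ∩ N(v). Then A(v) ∩ N(v') = ∅ and B(v') ∩ N(v) = ∅; that is, adding the edge v → v' forces no other edge additions. -/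
/-- In a finite transitive DAG, given incomparable vertices `u, u'`, a maximal
element `v` of `({u} ∪ A(u)) ∩ N(u')` and a minimal element `v'` of
`({u'} ∪ B(u')) ∩ N(v)` satisfy `A(v) ∩ N(v') = ∅` and `B(v') ∩ N(v) = ∅`:
adding the edge `v → v'` forces no other edge additions. -/
theorem stmt_11 {V : Type*} [Fintype V] (E : V → V → Prop)
    (htrans : Transitive E) (hirr : Irreflexive E)
    (A : V → Set V) (hA : ∀ w, A w = {x | E x w})
    (B : V → Set V) (hB : ∀ w, B w = {x | E w x})
    (N : V → Set V) (hN : ∀ w, N w = {x | x ≠ w ∧ ¬ E x w ∧ ¬ E w x})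
    (u u' : V) (huu' : u ≠ u' ∧ ¬ E u u' ∧ ¬ E u' u)
    (v : V) (hv : v ∈ ({u} ∪ A u) ∩ N u')
    (hvmax : ∀ x ∈ ({u} ∪ A u) ∩ N u', ¬ E x v)
    (v' : V) (hv' : v' ∈ ({u'} ∪ B u') ∩ N v)
    (hv'min : ∀ x ∈ ({u'} ∪ B u') ∩ N v, ¬ E v' x) :
    A v ∩ N v' = ∅ ∧ B v' ∩ N v = ∅ := by
  simp only [hA, hB, hN] at *
  obtain ⟨hv1, hvne, hvu', hu'v⟩ := hv
  obtain ⟨hv'1, hv'ne, hv'v, hvv'⟩ := hv'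
  constructor
  · ext x
    simp only [Set.mem_inter_iff, Set.mem_setOf_eq, Set.mem_empty_iff_false, iff_false]
    rintro ⟨hxv, hxne, hxv', hv'x⟩
    -- x is above u
    have hxu : x = u ∨ E x u := by
      rcases hv1 with h | h
      · exact Or.inr (h ▸ hxv)
      · exact Or.inr (htrans hxv h)
    -- x is incomparable with u'
    have h1 : x ≠ u' := by
      rintro rfl; exact hu'v hxv
    have h2 : ¬ E x u' := by
      intro h
      rcases hv'1 with h' | h'
      · exact hxv' (h' ▸ h)
      · exact hxv' (htrans h h')
    have h3 : ¬ E u' x := fun h => hu'v (htrans h hxv)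
    exact hvmax x ⟨hxu, h1, h2, h3⟩ hxv
  · ext x
    simp only [Set.mem_inter_iff, Set.mem_setOf_eq, Set.mem_empty_iff_false, iff_false]
    rintro ⟨hv'x, hxN⟩
    have hxu' : x = u' ∨ E u' x := by
      rcases hv'1 with h | h
      · exact Or.inr (h ▸ hv'x)
      · exact Or.inr (htrans h hv'x)
    exact hv'min x ⟨hxu', hxN⟩ hv'x
end

section
/- Let ℱ be a strongly connected finite directed graph of period d > 1, with cyclic partition S₁, …, S_d (ℱ(S_i) ⊆ S_{i+1 mod d} and ℱ^d restricted to each S_i is mixing). Let h be a surjective quotient map with h(G) = h(H) for some G ∈ S_i and H ∈ S_j where gcd(i − j, d) = 1. Then the quotient graph ℱ̄ = h ∘ ℱ ∘ h⁻¹ is mixing (has period 1). -/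
/-- There is a directed walk of length `n` from `a` to `b` in the graph with edge
relation `E`. -/
def WalkLen {V : Type*} (E : V → V → Prop) (n : ℕ) (a b : V) : Prop :=
  ∃ g : ℕ → V, g 0 = a ∧ g n = b ∧ ∀ i < n, E (g i) (g (i + 1))

lemma walkLen_refl {V : Type*} {E : V → V → Prop} (a : V) : WalkLen E 0 a a :=
  ⟨fun _ => a, rfl, rfl, by omega⟩

lemma walkLen_single {V : Type*} {E : V → V → Prop} {a b : V} (hab : E a b) :
    WalkLen E 1 a b :=
  ⟨fun k => if k = 0 then a else b, by simp, by simp, by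
    intro k hk
    interval_cases k
    simpa using hab⟩

lemma walkLen_comp {V : Type*} {E : V → V → Prop} {m n : ℕ} {a b c : V}
    (h1 : WalkLen E m a b) (h2 : WalkLen E n b c) : WalkLen E (m + n) a c := by
  obtain ⟨g1, h10, h1m, h1e⟩ := h1
  obtain ⟨g2, h20, h2n, h2e⟩ := h2
  refine ⟨fun k => if k < m then g1 k else g2 (k - m), ?_, ?_, ?_⟩
  · by_cases hm : 0 < m
    · simp [hm, h10]
    · have : m = 0 := by omega
      subst this
      simpa [h20, ← h10] using h1m.symm
  · have : ¬ (m + n < m) := by omega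
    simp [this, h2n]
  · intro k hk
    by_cases h1lt : k + 1 < m
    · have : k < m := by omega
      simpa [this, h1lt] using h1e k this
    · by_cases hkm : k < m
      · have hk1 : k + 1 = m := by omega
        simp only [if_pos hkm, if_neg h1lt]
        have e0 : k + 1 - m = 0 := by omega
        rw [e0, h20, ← h1m, ← hk1]
        exact h1e k hkm
      · have hkm' : ¬ (k + 1 < m) := by omega
        simp only [hkm, if_neg, not_false_iff, hkm']
        have hlt : k - m < n := by omega
        have := h2e (k - m) hlt
        have heq : k + 1 - m = (k - m) + 1 := by omega
        rw [heq]
        exact this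

lemma walkLen_pow {V : Type*} {E : V → V → Prop} {L : ℕ} {a : V}
    (hL : WalkLen E L a a) : ∀ t : ℕ, WalkLen E (t * L) a a := by
  intro t
  induction t with
  | zero => simpa using walkLen_refl a
  | succ t ih =>
    have := walkLen_comp ih hL
    simpa [Nat.succ_mul] using this

lemma rtg_walkLen {V : Type*} {E : V → V → Prop} {a b : V}
    (hab : Relation.ReflTransGen E a b) : ∃ n, WalkLen E n a b := by
  induction hab with
  | refl => exact ⟨0, walkLen_refl a⟩
  | tail _ hbc ih =>
    obtain ⟨n, hn⟩ := ih
    exact ⟨n + 1, walkLen_comp hn (walkLen_single hbc)⟩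

/-- If `ℱ` is `d`-periodic (`d > 1`) with cyclic partition `P`, and the quotient
map `h` identifies `G ∈ P i` and `H ∈ P j` with `i − j` relatively prime to `d`,
then the quotient graph `ℱ̄ = h ∘ ℱ ∘ h⁻¹` is mixing. -/
theorem stmt_13 {S S' : Type*} [Fintype S] [Fintype S'] (d : ℕ) (hd : 1 < d)
    (F : S → S → Prop) (hconn : ∀ a b : S, Relation.ReflTransGen F a b)
    (P : ZMod d → Set S)
    (hpart : ∀ x : S, ∃! i : ZMod d, x ∈ P i)
    (hcyc : ∀ x y : S, F x y → ∀ i : ZMod d, x ∈ P i → y ∈ P (i + 1))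
    (hmix : ∀ i : ZMod d, ∃ N : ℕ, ∀ m ≥ N, ∀ a ∈ P i, ∀ b ∈ P i, WalkLen F (d * m) a b)
    (h : S → S') (hsurj : Function.Surjective h)
    (Fbar : S' → S' → Prop)
    (hFbar : ∀ a' b', Fbar a' b' ↔ ∃ a b : S, h a = a' ∧ h b = b' ∧ F a b)
    (G H : S) (i j : ZMod d) (hG : G ∈ P i) (hH : H ∈ P j) (hGH : h G = h H)
    (hcop : IsUnit (i - j)) :
    ∃ N : ℕ, ∀ m ≥ N, ∀ a' b' : S', WalkLen Fbar m a' b' := by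
  haveI : NeZero d := ⟨by omega⟩
  -- map F-walks to Fbar-walks
  have hmap : ∀ {n : ℕ} {x y : S}, WalkLen F n x y → WalkLen Fbar n (h x) (h y) := by
    rintro n x y ⟨g, h0, hn, he⟩
    exact ⟨fun k => h (g k), by simp [h0], by simp [hn], fun k hk =>
      (hFbar _ _).2 ⟨g k, g (k + 1), rfl, rfl, he k hk⟩⟩
  -- residue of walk lengths
  have hres : ∀ {n : ℕ} {x y : S} {p q : ZMod d}, WalkLen F n x y → x ∈ P p → y ∈ P q →
      (n : ZMod d) = q - p := by
    rintro n x y p q ⟨g, h0, hn, he⟩ hx hy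
    have key : ∀ k, k ≤ n → g k ∈ P (p + k) := by
      intro k
      induction k with
      | zero => intro _; simpa [h0] using hx
      | succ k ih =>
        intro hk
        have := hcyc _ _ (he k (by omega)) _ (ih (by omega))
        simpa [add_assoc] using this
    have h1 : y ∈ P (p + n) := hn ▸ key n le_rfl
    have h2 : p + (n : ZMod d) = q := (hpart y).unique h1 hy
    linear_combination h2
  -- flexible walks: from x to y, all large lengths of form n₀ + d*m
  have hflex : ∀ x y : S, ∃ n₀ N : ℕ, ∀ m ≥ N, WalkLen F (n₀ + d * m) x y := by
    intro x y
    obtain ⟨n₀, hw⟩ := rtg_walkLen (hconn x y)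
    obtain ⟨q, hq, _⟩ := hpart y
    obtain ⟨N, hN⟩ := hmix q
    exact ⟨n₀, N, fun m hm => walkLen_comp hw (hN m hm y hq y hq)⟩
  obtain ⟨n₂, N₂, hloop⟩ : ∃ n₂ N₂ : ℕ, ∀ m ≥ N₂, WalkLen F (n₂ + d * m) H G :=
    hflex H G
  -- residue of n₂ + d * N₂
  have hres2 : ((n₂ + d * N₂ : ℕ) : ZMod d) = i - j := by
    push_cast
    rw [ZMod.natCast_self]
    simpa using hres (hloop N₂ le_rfl) hH hG
  -- loop at h G in Fbar of length n₂ + d * N₂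
  have hloopbar : WalkLen Fbar (n₂ + d * N₂) (h G) (h G) := by
    have := hmap (hloop N₂ le_rfl)
    rwa [← hGH] at this
  set L : ℕ := n₂ + d * N₂ with hL
  obtain ⟨u, hu⟩ := hcop
  -- for each pair of source/target vertices (via surjectivity), we build walks.
  -- choose representatives via surjectivity and fixed flexible walks a → G, H → b.
  choose rep hrep using hsurj
  choose n₁ N₁ hseg1 using fun a' : S' => hflex (rep a') G
  choose n₃ N₃ hseg3 using fun b' : S' => hflex H (rep b')
  set K1 := Finset.univ.sup (fun a' : S' => n₁ a' + d * N₁ a') with hK1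
  set K2 := Finset.univ.sup (fun b' : S' => n₃ b' + d * N₃ b') with hK2
  refine ⟨K1 + K2 + d * L, ?_⟩
  intro m hm a' b'
  have hs1 : n₁ a' + d * N₁ a' ≤ K1 :=
    Finset.le_sup (f := fun a' : S' => n₁ a' + d * N₁ a') (Finset.mem_univ a')
  have hs2 : n₃ b' + d * N₃ b' ≤ K2 :=
    Finset.le_sup (f := fun b' : S' => n₃ b' + d * N₃ b') (Finset.mem_univ b')
  -- choose the number of teleports t
  set c : ZMod d := ((m : ZMod d) - (n₁ a' : ZMod d) - (n₃ b' : ZMod d)) * ↑u⁻¹ with hc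
  set t := c.val with ht
  have htlt : t < d := ZMod.val_lt c
  have htcast : (t : ZMod d) = c := by
    rw [ht, ZMod.natCast_val, ZMod.cast_id]
  have hkey : ((u⁻¹ : (ZMod d)ˣ) : ZMod d) * (u : ZMod d) = 1 := u.inv_mul
  have hbase : ((n₁ a' + n₃ b' + t * L : ℕ) : ZMod d) = (m : ZMod d) := by
    push_cast
    rw [htcast, hc, hres2, ← hu]
    linear_combination ((m : ZMod d) - (n₁ a' : ZMod d) - (n₃ b' : ZMod d)) * hkey
  have htL : t * L ≤ d * L := Nat.mul_le_mul_right L (le_of_lt htlt)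
  have hle : n₁ a' + n₃ b' + t * L + d * (N₁ a' + N₃ b') ≤ m := by
    have : d * (N₁ a' + N₃ b') = d * N₁ a' + d * N₃ b' := by ring
    omega
  have hdvd : d ∣ m - (n₁ a' + n₃ b' + t * L) := by
    rw [← ZMod.natCast_eq_zero_iff, Nat.cast_sub (by omega), hbase, sub_self]
  obtain ⟨r, hr⟩ := hdvd
  have hmeq : m = (n₁ a' + n₃ b' + t * L) + d * r := by
    rw [← hr]; omega
  have hrge : N₁ a' + N₃ b' ≤ r := by
    have h1 : d * (N₁ a' + N₃ b') ≤ d * r := by omega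
    exact Nat.le_of_mul_le_mul_left h1 (by omega)
  set s := r - (N₁ a' + N₃ b') with hs
  have hrs : r = N₁ a' + N₃ b' + s := by omega
  set m₃ := N₃ b' + s with hm₃
  -- assemble the walk
  have w1 : WalkLen Fbar (n₁ a' + d * N₁ a') a' (h G) := by
    have := hmap (hseg1 a' (N₁ a') le_rfl)
    rwa [hrep] at this
  have wloop : WalkLen Fbar (t * L) (h G) (h G) := walkLen_pow hloopbar t
  have w3 : WalkLen Fbar (n₃ b' + d * m₃) (h G) b' := by
    have := hmap (hseg3 b' m₃ (by omega))
    rwa [← hGH, hrep] at this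
  have wtot := walkLen_comp (walkLen_comp w1 wloop) w3
  have hlen : (n₁ a' + d * N₁ a' + t * L) + (n₃ b' + d * m₃) = m := by
    rw [hmeq, hrs, hm₃]; ring
  rwa [hlen] at wtot
end

section
/- Let ℱ̄ be a strongly connected finite directed graph of period d > 1 with cyclic partition S'₁, …, S'_d, and let ℱ' be obtained from ℱ̄ by adding an edge G' → H' with G' ∈ S'_i, H' ∈ S'_j, where gcd(i − j + 1, d) = 1. Then ℱ' is mixing. -/
lemma WalkLen.nil {V : Type*} (E : V → V → Prop) (a : V) : WalkLen E 0 a a :=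
  ⟨fun _ => a, rfl, rfl, by omega⟩

lemma WalkLen.extend {V : Type*} {E : V → V → Prop} {n : ℕ} {a b c : V}
    (h : WalkLen E n a b) (he : E b c) : WalkLen E (n + 1) a c := by
  obtain ⟨g, h0, hn, hg⟩ := h
  refine ⟨fun k => if k = n + 1 then c else g k, by simp [h0], by simp, ?_⟩
  intro k hk
  rcases eq_or_lt_of_le (Nat.lt_succ_iff.mp hk) with h | h
  · subst h
    simpa [hn] using he
  · have h1 : k ≠ n + 1 := by omega
    have h2 : k + 1 ≠ n + 1 := by omega
    simp only [if_neg h1, if_neg h2]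
    exact hg k h

lemma WalkLen.trans {V : Type*} {E : V → V → Prop} {n m : ℕ} {a b c : V}
    (h1 : WalkLen E n a b) (h2 : WalkLen E m b c) : WalkLen E (n + m) a c := by
  induction m generalizing c with
  | zero =>
    obtain ⟨g, h0, hm, _⟩ := h2
    have hbc : b = c := h0.symm.trans hm
    subst hbc
    simpa using h1
  | succ m ih =>
    obtain ⟨g, h0, hm, hg⟩ := h2
    have hw : WalkLen E m b (g m) := ⟨g, h0, rfl, fun i hi => hg i (by omega)⟩
    have := (ih hw).extend (hm ▸ hg m (by omega))
    simpa [← Nat.add_assoc] using this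

lemma WalkLen.mono {V : Type*} {E E' : V → V → Prop} (hE : ∀ x y, E x y → E' x y)
    {n : ℕ} {a b : V} (h : WalkLen E n a b) : WalkLen E' n a b := by
  obtain ⟨g, h0, hn, hg⟩ := h
  exact ⟨g, h0, hn, fun i hi => hE _ _ (hg i hi)⟩

lemma exists_walkLen_of_reflTransGen {V : Type*} {E : V → V → Prop} {a b : V}
    (h : Relation.ReflTransGen E a b) : ∃ n, WalkLen E n a b := by
  induction h with
  | refl => exact ⟨0, WalkLen.nil E a⟩
  | tail _ he ih => obtain ⟨n, hn⟩ := ih; exact ⟨n + 1, hn.extend he⟩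

lemma WalkLen.iterate {V : Type*} {E : V → V → Prop} {L : ℕ} {x : V}
    (h : WalkLen E L x x) (t : ℕ) : WalkLen E (t * L) x x := by
  induction t with
  | zero => simpa using WalkLen.nil E x
  | succ t ih => simpa [Nat.succ_mul] using ih.trans h

lemma walk_class {S' : Type*} {d : ℕ} {Fbar : S' → S' → Prop} {P : ZMod d → Set S'}
    (hcyc : ∀ x y : S', Fbar x y → ∀ i : ZMod d, x ∈ P i → y ∈ P (i + 1))
    {n : ℕ} {a b : S'} {u : ZMod d}
    (h : WalkLen Fbar n a b) (ha : a ∈ P u) : b ∈ P (u + n) := by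
  obtain ⟨g, h0, hn, hg⟩ := h
  have key : ∀ k, k ≤ n → g k ∈ P (u + k) := by
    intro k
    induction k with
    | zero => intro _; simpa [h0] using ha
    | succ k ih =>
      intro hk
      have h1 := hcyc _ _ (hg k (by omega)) _ (ih (by omega))
      have h2 : u + (k : ZMod d) + 1 = u + ((k + 1 : ℕ) : ZMod d) := by push_cast; ring
      rwa [h2] at h1
  have := key n le_rfl
  rwa [hn] at this

/-- If `ℱ̄` is `d`-periodic (`d > 1`) with cyclic partition `P`, and `ℱ'` is
obtained from `ℱ̄` by adding an edge `G' → H'` with `G' ∈ P i`, `H' ∈ P j` and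
`i − j + 1` relatively prime to `d`, then `ℱ'` is mixing. -/
theorem stmt_14 {S' : Type*} [Fintype S'] (d : ℕ) (hd : 1 < d)
    (Fbar : S' → S' → Prop) (hconn : ∀ a b : S', Relation.ReflTransGen Fbar a b)
    (P : ZMod d → Set S')
    (hpart : ∀ x : S', ∃! i : ZMod d, x ∈ P i)
    (hcyc : ∀ x y : S', Fbar x y → ∀ i : ZMod d, x ∈ P i → y ∈ P (i + 1))
    (hmix : ∀ i : ZMod d, ∃ N : ℕ, ∀ m ≥ N, ∀ a ∈ P i, ∀ b ∈ P i, WalkLen Fbar (d * m) a b)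
    (G' H' : S') (i j : ZMod d) (hG : G' ∈ P i) (hH : H' ∈ P j)
    (hcop : IsUnit (i - j + 1)) :
    ∃ N : ℕ, ∀ m ≥ N, ∀ a b : S',
      WalkLen (fun x y => Fbar x y ∨ (x = G' ∧ y = H')) m a b := by
  haveI : NeZero d := ⟨by omega⟩
  classical
  set E' : S' → S' → Prop := fun x y => Fbar x y ∨ (x = G' ∧ y = H') with hE'
  have hmono : ∀ x y, Fbar x y → E' x y := fun x y h => Or.inl h
  -- walks to G' and from H'
  have h1 : ∀ a : S', ∃ n, WalkLen Fbar n a G' :=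
    fun a => exists_walkLen_of_reflTransGen (hconn a G')
  have h2 : ∀ b : S', ∃ n, WalkLen Fbar n H' b :=
    fun b => exists_walkLen_of_reflTransGen (hconn H' b)
  choose f1 hf1 using h1
  choose f2 hf2 using h2
  obtain ⟨c, hc⟩ := exists_walkLen_of_reflTransGen (hconn H' G')
  choose NN hNN using hmix
  set NA : ℕ := Finset.univ.sup NN with hNA
  set L : ℕ := Finset.univ.sup f1 with hL
  set M : ℕ := Finset.univ.sup f2 with hM
  -- (c : ZMod d) = i - j
  have hcval : (c : ZMod d) = i - j := by
    obtain ⟨iG, hiG, huniq⟩ := hpart G'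
    have e1 : i = iG := huniq i hG
    have e2 : j + c = iG := huniq _ (walk_class hcyc hc hH)
    rw [← e2] at e1
    linear_combination -e1
  set v := hcop.unit with hv
  have hvv : (v : ZMod d) = i - j + 1 := hcop.unit_spec
  have hc1 : ((c + 1 : ℕ) : ZMod d) = (v : ZMod d) := by
    push_cast
    rw [hcval, hvv]
  -- loop at H' of length c+1 in E'
  have hloop : WalkLen E' (c + 1) H' H' :=
    (hc.mono hmono).extend (Or.inr ⟨rfl, rfl⟩)
  refine ⟨d * NA + L + M + 1 + d * (c + 1), fun m hm a b => ?_⟩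
  obtain ⟨α, hα, _⟩ := hpart a
  set base : ℕ := f1 a + 1 + f2 b with hbase
  set r : ZMod d := ((v⁻¹ : (ZMod d)ˣ) : ZMod d) * ((m : ZMod d) - (base : ZMod d)) with hr
  set t : ℕ := r.val with ht
  set total : ℕ := base + t * (c + 1) with htotal
  have htlt : t < d := ZMod.val_lt r
  have hbb : base ≤ L + M + 1 := by
    have := Finset.le_sup (f := f1) (Finset.mem_univ a)
    have := Finset.le_sup (f := f2) (Finset.mem_univ b)
    omega
  have htot_le : total + d * NA ≤ m := by
    have : t * (c + 1) ≤ (d - 1) * (c + 1) := by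
      apply Nat.mul_le_mul_right
      omega
    have hd1 : (d - 1) * (c + 1) + (c + 1) = d * (c + 1) := by
      have : d - 1 + 1 = d := by omega
      nlinarith [this]
    omega
  -- (total : ZMod d) = m
  have hcast : ((total : ℕ) : ZMod d) = (m : ZMod d) := by
    have h3 : ((t : ℕ) : ZMod d) = r := ZMod.natCast_zmod_val r
    rw [htotal]
    push_cast
    rw [h3, ← Nat.cast_add_one, hc1, hr]
    have hinv : ((v⁻¹ : (ZMod d)ˣ) : ZMod d) * ((v : (ZMod d)ˣ) : ZMod d) = 1 :=
      Units.inv_mul v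
    calc (base : ZMod d) + ↑v⁻¹ * ((m : ZMod d) - base) * ↑v
        = (base : ZMod d) + (↑v⁻¹ * ↑v) * ((m : ZMod d) - base) := by ring
      _ = (m : ZMod d) := by rw [hinv]; ring
  have hdvd : d ∣ m - total := by
    have hle : total ≤ m := by omega
    have : ((m - total : ℕ) : ZMod d) = 0 := by
      rw [Nat.cast_sub hle, hcast, sub_self]
    exact (ZMod.natCast_eq_zero_iff _ _).mp this
  obtain ⟨m', hm'⟩ := hdvd
  have hm'ge : m' ≥ NA := by
    have hd0 : 0 < d := by omega
    have : d * NA ≤ d * m' := by omega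
    exact Nat.le_of_mul_le_mul_left this hd0
  have hm'NN : m' ≥ NN α := le_trans (Finset.le_sup (Finset.mem_univ α)) hm'ge
  -- assemble the walk
  have wloop : WalkLen E' (d * m') a a := (hNN α m' hm'NN a hα a hα).mono hmono
  have w1 : WalkLen E' (f1 a) a G' := (hf1 a).mono hmono
  have wedge : WalkLen E' 1 G' H' := (WalkLen.nil E' G').extend (Or.inr ⟨rfl, rfl⟩)
  have wloops : WalkLen E' (t * (c + 1)) H' H' := hloop.iterate t
  have w2 : WalkLen E' (f2 b) H' b := (hf2 b).mono hmono
  have wtotal : WalkLen E' (d * m' + (f1 a + (1 + (t * (c + 1) + f2 b)))) a b :=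
    wloop.trans (w1.trans (wedge.trans (wloops.trans w2)))
  have heq : d * m' + (f1 a + (1 + (t * (c + 1) + f2 b))) = m := by omega
  rwa [heq] at wtotal
end

section
/- (Persistence for thresholded transition maps.) Let D = {(x_i, y_i)}_{i=1}^K be sampled data, let 𝒢 < 𝒢' be grids with refinement map h (G ⊆ h(G)), define n_𝒢(G,H) = #{i : x_i ∈ G, y_i ∈ H}, n_max(𝒢) = max_{G,H} n_𝒢(G,H), and suppose every element of 𝒢' contains at most M elements of 𝒢 (in the sense that #h⁻¹(G') ≤ M for all G'). Then n_max(𝒢') ≤ M² · n_max(𝒢), and consequently if thresholds satisfy μ' ≤ μ / M², then n_𝒢(G,H) > μ · n_max(𝒢) implies n_{𝒢'}(h(G), h(H)) > μ' · n_max(𝒢'); hence h is a graph homomorphism from the thresholded map ℱ̂_𝒢 to ℱ̂_{𝒢'}. -/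
open scoped Classical in
/-- The number of data pairs `(x_i, y_i)` with `x_i ∈ G` and `y_i ∈ H`. -/
noncomputable def cnt {X : Type*} {K : ℕ} (x y : Fin K → X) (G H : Set X) : ℕ :=
  (Finset.univ.filter fun i => x i ∈ G ∧ y i ∈ H).card

/-- The maximal transition count over all pairs of elements of the grid `𝒢`. -/
noncomputable def cntmax {X : Type*} {K : ℕ} (x y : Fin K → X) (𝒢 : Finset (Set X)) : ℕ :=
  (𝒢 ×ˢ 𝒢).sup fun p => cnt x y p.1 p.2

open scoped Classical

lemma cnt_le_cntmax {X : Type*} {K : ℕ} (x y : Fin K → X) {𝒢 : Finset (Set X)} {G H : Set X}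
    (hG : G ∈ 𝒢) (hH : H ∈ 𝒢) : cnt x y G H ≤ cntmax x y 𝒢 := by
  unfold cntmax
  exact Finset.le_sup (f := fun p : Set X × Set X => cnt x y p.1 p.2) (b := (G, H)) (Finset.mem_product.mpr ⟨hG, hH⟩)

lemma cnt_mono {X : Type*} {K : ℕ} (x y : Fin K → X) {G H G' H' : Set X}
    (hG : G ⊆ G') (hH : H ⊆ H') : cnt x y G H ≤ cnt x y G' H' := by
  apply Finset.card_le_card
  intro i hi
  simp only [cnt, Finset.mem_filter, Finset.mem_univ, true_and] at hi ⊢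
  exact ⟨hG hi.1, hH hi.2⟩

lemma cnt_coarse_le {X : Type*} {K : ℕ} (x y : Fin K → X)
    (𝒢 𝒢' : Finset (Set X)) (h : Set X → Set X)
    (hh : ∀ G ∈ 𝒢, h G ∈ 𝒢' ∧ G ⊆ h G)
    (hxpart : ∀ i, ∃! G : Set X, G ∈ 𝒢 ∧ x i ∈ G)
    (hypart : ∀ i, ∃! G : Set X, G ∈ 𝒢 ∧ y i ∈ G)
    (hxpart' : ∀ i, ∃! G' : Set X, G' ∈ 𝒢' ∧ x i ∈ G')
    (hypart' : ∀ i, ∃! G' : Set X, G' ∈ 𝒢' ∧ y i ∈ G')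
    (M : ℕ)
    (hMbound : ∀ G' ∈ 𝒢', Set.ncard {G : Set X | G ∈ 𝒢 ∧ h G = G'} ≤ M)
    {G' H' : Set X} (hG' : G' ∈ 𝒢') (hH' : H' ∈ 𝒢') :
    cnt x y G' H' ≤ M ^ 2 * cntmax x y 𝒢 := by
  classical
  set P := (𝒢.filter fun G => h G = G') ×ˢ (𝒢.filter fun H => h H = H') with hP
  have hsub : (Finset.univ.filter fun i => x i ∈ G' ∧ y i ∈ H') ⊆
      P.biUnion fun p => Finset.univ.filter fun i => x i ∈ p.1 ∧ y i ∈ p.2 := by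
    intro i hi
    simp only [Finset.mem_filter, Finset.mem_univ, true_and] at hi
    obtain ⟨G, ⟨hGm, hGx⟩, _⟩ := hxpart i
    obtain ⟨H, ⟨hHm, hHy⟩, _⟩ := hypart i
    have hGeq : h G = G' := by
      obtain ⟨Z, _, hZu⟩ := hxpart' i
      rw [hZu (h G) ⟨(hh G hGm).1, (hh G hGm).2 hGx⟩, hZu G' ⟨hG', hi.1⟩]
    have hHeq : h H = H' := by
      obtain ⟨Z, _, hZu⟩ := hypart' i
      rw [hZu (h H) ⟨(hh H hHm).1, (hh H hHm).2 hHy⟩, hZu H' ⟨hH', hi.2⟩]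
    refine Finset.mem_biUnion.mpr ⟨(G, H), ?_, ?_⟩
    · exact Finset.mem_product.mpr ⟨Finset.mem_filter.mpr ⟨hGm, hGeq⟩,
        Finset.mem_filter.mpr ⟨hHm, hHeq⟩⟩
    · simp [hGx, hHy]
  have hcard : ∀ S ∈ [(𝒢.filter fun G => h G = G'), (𝒢.filter fun H => h H = H')],
      Finset.card S ≤ M := by
    intro S hS
    simp only [List.mem_cons, List.mem_singleton] at hS
    rcases hS with rfl | rfl | hc
    · have := hMbound G' hG'
      rwa [show {G : Set X | G ∈ 𝒢 ∧ h G = G'} = ↑(𝒢.filter fun G => h G = G') by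
        ext G; simp, Set.ncard_coe_finset] at this
    · have := hMbound H' hH'
      rwa [show {G : Set X | G ∈ 𝒢 ∧ h G = H'} = ↑(𝒢.filter fun H => h H = H') by
        ext G; simp, Set.ncard_coe_finset] at this
    · cases hc
  have hPcard : P.card ≤ M ^ 2 := by
    rw [hP, Finset.card_product, sq]
    exact Nat.mul_le_mul (hcard _ (by simp)) (hcard _ (by simp))
  calc cnt x y G' H' ≤ ∑ p ∈ P, cnt x y p.1 p.2 :=
        le_trans (Finset.card_le_card hsub) Finset.card_biUnion_le
    _ ≤ ∑ _p ∈ P, cntmax x y 𝒢 := by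
        refine Finset.sum_le_sum fun p hp => ?_
        rw [hP, Finset.mem_product] at hp
        exact cnt_le_cntmax x y (Finset.mem_filter.mp hp.1).1 (Finset.mem_filter.mp hp.2).1
    _ = P.card * cntmax x y 𝒢 := by rw [Finset.sum_const, smul_eq_mul]
    _ ≤ M ^ 2 * cntmax x y 𝒢 := Nat.mul_le_mul_right _ hPcard

/-- Persistence for thresholded transition maps: if each coarse grid element
contains at most `M` fine grid elements, then `n_max(𝒢') ≤ M² · n_max(𝒢)`, and
for thresholds `μ' ≤ μ / M²` the refinement map `h` is a graph homomorphism from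
the thresholded map `ℱ̂_𝒢` to `ℱ̂_𝒢'`. -/
theorem stmt_17 {X : Type*} (K : ℕ) (x y : Fin K → X)
    (𝒢 𝒢' : Finset (Set X)) (h : Set X → Set X)
    (hh : ∀ G ∈ 𝒢, h G ∈ 𝒢' ∧ G ⊆ h G)
    (hxpart : ∀ i, ∃! G : Set X, G ∈ 𝒢 ∧ x i ∈ G)
    (hypart : ∀ i, ∃! G : Set X, G ∈ 𝒢 ∧ y i ∈ G)
    (hxpart' : ∀ i, ∃! G' : Set X, G' ∈ 𝒢' ∧ x i ∈ G')
    (hypart' : ∀ i, ∃! G' : Set X, G' ∈ 𝒢' ∧ y i ∈ G')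
    (M : ℕ) (hM : 0 < M)
    (hMbound : ∀ G' ∈ 𝒢', Set.ncard {G : Set X | G ∈ 𝒢 ∧ h G = G'} ≤ M)
    (μ μ' : ℝ) (hμ : μ' ≤ μ / (M ^ 2 : ℝ)) :
    cntmax x y 𝒢' ≤ M ^ 2 * cntmax x y 𝒢 ∧
    ∀ G ∈ 𝒢, ∀ H ∈ 𝒢,
      (cnt x y G H : ℝ) > μ * (cntmax x y 𝒢 : ℝ) →
      (cnt x y (h G) (h H) : ℝ) > μ' * (cntmax x y 𝒢' : ℝ) := by
  have key : cntmax x y 𝒢' ≤ M ^ 2 * cntmax x y 𝒢 := by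
    apply Finset.sup_le
    intro p hp
    rw [Finset.mem_product] at hp
    exact cnt_coarse_le x y 𝒢 𝒢' h hh hxpart hypart hxpart' hypart' M hMbound hp.1 hp.2
  refine ⟨key, fun G hG H hH hbig => ?_⟩
  have himg : cnt x y G H ≤ cnt x y (h G) (h H) :=
    cnt_mono x y (hh G hG).2 (hh H hH).2
  have hM2 : (0 : ℝ) < (M : ℝ) ^ 2 := by positivity
  set N := cntmax x y 𝒢
  set N' := cntmax x y 𝒢'
  rcases Nat.eq_zero_or_pos N' with hN0 | hNpos
  · -- then N = 0 and cnt G H = 0, contradicting hbig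
    exfalso
    have hle : cnt x y (h G) (h H) ≤ N' :=
      cnt_le_cntmax x y (hh G hG).1 (hh H hH).1
    have h0 : cnt x y G H = 0 := by omega
    have hN : N = 0 := by
      apply Nat.le_zero.mp
      rw [← hN0]
      show cntmax x y 𝒢 ≤ N'
      unfold cntmax
      apply Finset.sup_le
      intro p hp
      rw [Finset.mem_product] at hp
      calc cnt x y p.1 p.2 ≤ cnt x y (h p.1) (h p.2) :=
            cnt_mono x y (hh _ hp.1).2 (hh _ hp.2).2
        _ ≤ N' := cnt_le_cntmax x y (hh _ hp.1).1 (hh _ hp.2).1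
    rw [h0, hN] at hbig
    simp at hbig
  · rcases le_or_gt 0 μ with hμ0 | hμ0
    · have c1 : μ' * (N' : ℝ) ≤ (μ / (M : ℝ) ^ 2) * (N' : ℝ) := by
        apply mul_le_mul_of_nonneg_right hμ (by positivity)
      have c2 : (μ / (M : ℝ) ^ 2) * (N' : ℝ) ≤ (μ / (M : ℝ) ^ 2) * ((M : ℝ) ^ 2 * N) := by
        apply mul_le_mul_of_nonneg_left _ (by positivity)
        calc (N' : ℝ) ≤ ((M ^ 2 * N : ℕ) : ℝ) := by exact_mod_cast key
          _ = (M : ℝ) ^ 2 * N := by push_cast; ring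
      have c3 : (μ / (M : ℝ) ^ 2) * ((M : ℝ) ^ 2 * N) = μ * N := by
        field_simp
      calc μ' * (N' : ℝ) ≤ μ * N := by linarith
        _ < cnt x y G H := hbig
        _ ≤ cnt x y (h G) (h H) := by exact_mod_cast himg
    · have : μ' * (N' : ℝ) < 0 := by
        apply mul_neg_of_neg_of_pos
        · have : μ / (M : ℝ) ^ 2 < 0 := div_neg_of_neg_of_pos hμ0 hM2
          linarith
        · exact_mod_cast hNpos
      calc μ' * (N' : ℝ) < 0 := this
        _ ≤ cnt x y (h G) (h H) := by positivity
end
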